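/- arXiv:2106.11612 — 7 statements merged into one kernel-verified Lean document; each statement's English description precedes it below -/
import Mathlib

section
/- Let d and K be positive integers, let L > 0, and let λ ≥ max(1, L²). Let x₁, …, x_K ∈ ℝ^d satisfy ‖x_k‖₂ ≤ L for all k ∈ {1,…,K}. Define Σ₀ = λ·I_d and Σ_k = Σ₀ + Σ_{i=1}^{k} x_i x_iᵀ for k ≥ 1. Then Σ_{k=1}^{K} x_kᵀ Σ_{k−1}^{−1} x_k ≤ 2 d · log((dλ + K L²)/(d λ)). -/
/-!
By the matrix determinant lemma, `det Σ_k = det Σ_{k-1} * (1 + u_k)` with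
`u_k = x_kᵀ Σ_{k-1}⁻¹ x_k`, so `∑ log (1 + u_k) = log det Σ_K - d log λ`. Since `Σ_{k-1} ≥ λ I`
and `‖x_k‖² ≤ L² ≤ λ`, each `u_k` lies in `[0, 1]`, where `u ≤ 2 log (1 + u)`. Finally, Jensen's
inequality for `log` on the eigenvalues (AM–GM) gives `log det Σ_K ≤ d log (tr Σ_K / d)`, and
`tr Σ_K ≤ d λ + K L²`.
-/

open Matrix Finset

lemma Real.le_two_mul_log_one_add {u : ℝ} (h0 : 0 ≤ u) (h1 : u ≤ 1) :
    u ≤ 2 * Real.log (1 + u) := by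
  have hlog := Real.one_sub_inv_le_log_of_pos (x := 1 + u) (by linarith)
  have hfrac : 1 - (1 + u)⁻¹ = u / (1 + u) := by field_simp; ring
  rw [hfrac, div_le_iff₀ (by linarith)] at hlog
  nlinarith

namespace Matrix

theorem posSemidef_sum_vecMulVec_self {ι n : Type*} [Fintype n] (s : Finset ι) (x : ι → n → ℝ) :
    (∑ i ∈ s, vecMulVec (x i) (x i)).PosSemidef :=
  posSemidef_sum _ fun i _ => by simpa using posSemidef_vecMulVec_self_star (x i)

variable {n : Type*} [Fintype n] [DecidableEq n]

theorem det_add_vecMulVec {α : Type*} [CommRing α] {A : Matrix n n α} (hA : IsUnit A.det)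
    (u v : n → α) : (A + vecMulVec u v).det = A.det * (1 + v ⬝ᵥ A⁻¹ *ᵥ u) := by
  rw [vecMulVec_eq Unit, det_add_replicateCol_mul_replicateRow hA, Matrix.mul_assoc,
    ← replicateCol_mulVec, det_unique (1 + _), add_apply, one_apply_eq,
    replicateRow_mul_replicateCol_apply]

theorem PosDef.log_det_le [Nonempty n] {A : Matrix n n ℝ} (hA : A.PosDef) :
    Real.log A.det ≤ Fintype.card n * Real.log (A.trace / Fintype.card n) := by
  have hcard : (0 : ℝ) < Fintype.card n := by exact_mod_cast Fintype.card_pos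
  have jensen := strictConcaveOn_log_Ioi.concaveOn.le_map_sum (t := univ)
    (w := fun _ => (Fintype.card n : ℝ)⁻¹) (p := hA.isHermitian.eigenvalues)
    (fun _ _ => by positivity) (by simp [hcard.ne'])
    (fun i _ => hA.eigenvalues_pos i)
  rw [← smul_sum, ← smul_sum, smul_eq_mul, smul_eq_mul,
    ← Real.log_prod fun i _ => (hA.eigenvalues_pos i).ne', inv_mul_eq_div, div_le_iff₀' hcard,
    ← div_eq_inv_mul] at jensen
  rwa [hA.isHermitian.det_eq_prod_eigenvalues, hA.isHermitian.trace_eq_sum_eigenvalues]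

theorem smul_one_add_inv_quadForm_le {lam : ℝ} (hlam : 0 < lam) {P : Matrix n n ℝ}
    (hP : P.PosSemidef) (v : n → ℝ) : lam * (v ⬝ᵥ (lam • 1 + P)⁻¹ *ᵥ v) ≤ v ⬝ᵥ v := by
  have hA : IsUnit (lam • 1 + P).det :=
    ((PosDef.one.smul hlam).add_posSemidef hP).det_pos.ne'.isUnit
  set y := (lam • 1 + P)⁻¹ *ᵥ v
  have hv : v = lam • y + P *ᵥ y :=
    calc v = (lam • 1 + P) *ᵥ y := by rw [mulVec_mulVec, mul_nonsing_inv _ hA, one_mulVec]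
      _ = lam • y + P *ᵥ y := by rw [add_mulVec, smul_mulVec, one_mulVec]
  have key : v ⬝ᵥ v - lam * (v ⬝ᵥ y) = lam * (y ⬝ᵥ P *ᵥ y) + (P *ᵥ y) ⬝ᵥ (P *ᵥ y) :=
    calc v ⬝ᵥ v - lam * (v ⬝ᵥ y) = v ⬝ᵥ P *ᵥ y := by
          rw [eq_sub_of_add_eq' hv.symm, dotProduct_sub, dotProduct_smul, smul_eq_mul]
      _ = (lam • y + P *ᵥ y) ⬝ᵥ P *ᵥ y := by rw [← hv]
      _ = _ := by rw [add_dotProduct, smul_dotProduct, smul_eq_mul]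
  have hyPy : 0 ≤ y ⬝ᵥ P *ᵥ y := by simpa using hP.dotProduct_mulVec_nonneg y
  have hPy : 0 ≤ (P *ᵥ y) ⬝ᵥ (P *ᵥ y) := dotProduct_self_star_nonneg _
  nlinarith

end Matrix

section RegularizedGram

variable {n : Type*} [DecidableEq n] (lam : ℝ) (x : ℕ → n → ℝ)

noncomputable def regularizedGram (k : ℕ) : Matrix n n ℝ :=
  lam • 1 + ∑ i ∈ Icc 1 k, vecMulVec (x i) (x i)

theorem regularizedGram_succ (k : ℕ) :
    regularizedGram lam x (k + 1) =
      regularizedGram lam x k + vecMulVec (x (k + 1)) (x (k + 1)) := by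
  rw [regularizedGram, regularizedGram, sum_Icc_succ_top (Nat.le_add_left 1 k), add_assoc]

variable [Fintype n] {lam}

theorem posDef_regularizedGram (hlam : 0 < lam) (k : ℕ) : (regularizedGram lam x k).PosDef :=
  (PosDef.one.smul hlam).add_posSemidef (posSemidef_sum_vecMulVec_self _ x)

theorem det_regularizedGram (hlam : 0 < lam) (k : ℕ) :
    (regularizedGram lam x k).det =
      lam ^ Fintype.card n *
        ∏ i ∈ Icc 1 k, (1 + x i ⬝ᵥ (regularizedGram lam x (i - 1))⁻¹ *ᵥ x i) := by
  induction k with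
  | zero => simp [regularizedGram]
  | succ k ih =>
    rw [regularizedGram_succ,
      det_add_vecMulVec (posDef_regularizedGram x hlam k).det_pos.ne'.isUnit, ih,
      prod_Icc_succ_top (Nat.le_add_left 1 k), Nat.add_sub_cancel, mul_assoc]

theorem trace_regularizedGram (k : ℕ) :
    (regularizedGram lam x k).trace = Fintype.card n * lam + ∑ i ∈ Icc 1 k, x i ⬝ᵥ x i := by
  simp [regularizedGram, trace_sum, trace_vecMulVec, mul_comm]

theorem log_det_regularizedGram_le [Nonempty n] (hlam : 0 < lam) {K : ℕ} {C : ℝ}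
    (hx : ∀ k ∈ Icc 1 K, x k ⬝ᵥ x k ≤ C) :
    Real.log (regularizedGram lam x K).det ≤
      Fintype.card n * Real.log ((Fintype.card n * lam + K * C) / Fintype.card n) := by
  have hcard : (0 : ℝ) < Fintype.card n := by exact_mod_cast Fintype.card_pos
  have hpos := posDef_regularizedGram x hlam K
  refine hpos.log_det_le.trans ?_
  have htrace : (regularizedGram lam x K).trace ≤ Fintype.card n * lam + K * C := by
    rw [trace_regularizedGram]
    simpa using sum_le_sum hx
  gcongr
  exact div_pos hpos.trace_pos hcard

theorem inv_quadForm_regularizedGram_nonneg (hlam : 0 < lam) (k : ℕ) :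
    0 ≤ x k ⬝ᵥ (regularizedGram lam x (k - 1))⁻¹ *ᵥ x k := by
  simpa using (posDef_regularizedGram x hlam (k - 1)).inv.posSemidef.dotProduct_mulVec_nonneg (x k)

theorem inv_quadForm_regularizedGram_le_one (hlam : 0 < lam) {k : ℕ} (hxk : x k ⬝ᵥ x k ≤ lam) :
    x k ⬝ᵥ (regularizedGram lam x (k - 1))⁻¹ *ᵥ x k ≤ 1 := by
  have hle := smul_one_add_inv_quadForm_le hlam
    (posSemidef_sum_vecMulVec_self (Icc 1 (k - 1)) x) (x k)
  rw [← regularizedGram] at hle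
  exact le_of_mul_le_mul_left (by linarith) hlam

theorem sum_log_one_add_inv_quadForm (hlam : 0 < lam) (K : ℕ) :
    ∑ k ∈ Icc 1 K, Real.log (1 + x k ⬝ᵥ (regularizedGram lam x (k - 1))⁻¹ *ᵥ x k) =
      Real.log (regularizedGram lam x K).det - Fintype.card n * Real.log lam := by
  have hpos k : 0 < 1 + x k ⬝ᵥ (regularizedGram lam x (k - 1))⁻¹ *ᵥ x k := by
    linarith [inv_quadForm_regularizedGram_nonneg x hlam k]
  rw [det_regularizedGram x hlam, Real.log_mul (by positivity) (prod_pos fun k _ => hpos k).ne',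
    Real.log_pow, Real.log_prod fun k _ => (hpos k).ne']
  ring

end RegularizedGram

theorem elliptical_potential_general
    (d K : ℕ) (hd : 0 < d)
    (L lam : ℝ) (hlam : max 1 (L ^ 2) ≤ lam)
    (x : ℕ → Fin d → ℝ)
    (hx : ∀ k ∈ Finset.Icc 1 K, Real.sqrt (x k ⬝ᵥ x k) ≤ L)
    (Sig : ℕ → Matrix (Fin d) (Fin d) ℝ)
    (hSig : ∀ k : ℕ, Sig k = lam • (1 : Matrix (Fin d) (Fin d) ℝ)
        + ∑ i ∈ Finset.Icc 1 k, Matrix.vecMulVec (x i) (x i)) :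
    ∑ k ∈ Finset.Icc 1 K, x k ⬝ᵥ ((Sig (k - 1))⁻¹).mulVec (x k)
      ≤ 2 * d * Real.log ((d * lam + K * L ^ 2) / (d * lam)) := by
  have hlam0 : 0 < lam := one_pos.trans_le ((le_max_left _ _).trans hlam)
  have hxL : ∀ k ∈ Icc 1 K, x k ⬝ᵥ x k ≤ L ^ 2 := fun k hk => (Real.sqrt_le_iff.mp (hx k hk)).2
  have hxlam : ∀ k ∈ Icc 1 K, x k ⬝ᵥ x k ≤ lam := fun k hk =>
    (hxL k hk).trans ((le_max_right _ _).trans hlam)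
  obtain rfl : Sig = regularizedGram lam x := funext hSig
  have : Nonempty (Fin d) := ⟨⟨0, hd⟩⟩
  have hd0 : (0 : ℝ) < d := by exact_mod_cast hd
  calc ∑ k ∈ Icc 1 K, x k ⬝ᵥ (regularizedGram lam x (k - 1))⁻¹ *ᵥ x k
      ≤ ∑ k ∈ Icc 1 K, 2 * Real.log (1 + x k ⬝ᵥ (regularizedGram lam x (k - 1))⁻¹ *ᵥ x k) :=
        sum_le_sum fun k hk => Real.le_two_mul_log_one_add
          (inv_quadForm_regularizedGram_nonneg x hlam0 k)
          (inv_quadForm_regularizedGram_le_one x hlam0 (hxlam k hk))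
    _ = 2 * (Real.log (regularizedGram lam x K).det - d * Real.log lam) := by
        rw [← mul_sum, sum_log_one_add_inv_quadForm x hlam0, Fintype.card_fin]
    _ ≤ 2 * (d * Real.log ((d * lam + K * L ^ 2) / d) - d * Real.log lam) := by
        gcongr
        simpa using log_det_regularizedGram_le x hlam0 hxL
    _ = 2 * d * Real.log ((d * lam + K * L ^ 2) / (d * lam)) := by
        rw [Real.log_div (by positivity) hd0.ne', Real.log_div (by positivity) (by positivity),
          Real.log_mul hd0.ne' hlam0.ne']
        ring

/-- Elliptical potential lemma: for `x₁,…,x_K ∈ ℝ^d` with `‖x_k‖₂ ≤ L` and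
`λ ≥ max(1, L²)`, setting `Σ_k = λ I + ∑_{i≤k} x_i x_iᵀ`, one has
`∑_{k=1}^K x_kᵀ Σ_{k-1}⁻¹ x_k ≤ 2 d log((dλ + K L²)/(dλ))`. -/
theorem elliptical_potential
    (d K : ℕ) (hd : 0 < d) (hK : 0 < K)
    (L lam : ℝ) (hL : 0 < L) (hlam : max 1 (L ^ 2) ≤ lam)
    (x : ℕ → Fin d → ℝ)
    (hx : ∀ k ∈ Finset.Icc 1 K, Real.sqrt (x k ⬝ᵥ x k) ≤ L)
    (Sig : ℕ → Matrix (Fin d) (Fin d) ℝ)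
    (hSig : ∀ k : ℕ, Sig k = lam • (1 : Matrix (Fin d) (Fin d) ℝ)
        + ∑ i ∈ Finset.Icc 1 k, Matrix.vecMulVec (x i) (x i)) :
    ∑ k ∈ Finset.Icc 1 K, x k ⬝ᵥ ((Sig (k - 1))⁻¹).mulVec (x k)
      ≤ 2 * d * Real.log ((d * lam + K * L ^ 2) / (d * lam)) :=
  elliptical_potential_general d K hd L lam hlam x hx Sig hSig
end

section
/- Let d, l, m be positive integers such that (m − 1) · 4^{−l} ≤ 2 d · log(1 + m/d), where log is the natural logarithm. Then m ≤ 17 · d · l · 4^l. -/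
/-- Arithmetic step: if `(m - 1) 4^{-l} ≤ 2 d log(1 + m/d)`, then `m ≤ 17 d l 4^l`. -/
theorem level_size_arith
    (d l m : ℕ) (hd : 0 < d) (hl : 0 < l) (hm : 0 < m)
    (h : ((m : ℝ) - 1) * ((4 : ℝ) ^ l)⁻¹ ≤ 2 * d * Real.log (1 + (m : ℝ) / d)) :
    (m : ℝ) ≤ 17 * d * l * 4 ^ l := by
  have hd1 : (1:ℝ) ≤ (d:ℝ) := by exact_mod_cast hd
  have hl1 : (1:ℝ) ≤ (l:ℝ) := by exact_mod_cast hl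
  have hm0 : (0:ℝ) ≤ (m:ℝ) := by positivity
  have h4 : (4:ℝ) ≤ 4 ^ l := by
    calc (4:ℝ) = 4 ^ 1 := by norm_num
    _ ≤ 4 ^ l := pow_le_pow_right₀ (by norm_num) hl
  have h4pos : (0:ℝ) < 4 ^ l := by positivity
  have hdpos : (0:ℝ) < (d:ℝ) := by linarith
  have hxpos : (0:ℝ) < 1 + (m:ℝ)/d := by positivity
  have hapos : (0:ℝ) < 8 * (4:ℝ)^l := by positivity
  -- tangent-line bound
  have hlog1 : Real.log ((1 + (m:ℝ)/d) / (8*4^l)) ≤ (1 + (m:ℝ)/d)/(8*4^l) - 1 :=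
    Real.log_le_sub_one_of_pos (by positivity)
  have hsplit : Real.log ((1 + (m:ℝ)/d) / (8*4^l))
      = Real.log (1+(m:ℝ)/d) - Real.log (8*4^l) :=
    Real.log_div (ne_of_gt hxpos) (ne_of_gt hapos)
  have hlog8 : Real.log (8*(4:ℝ)^l) = (3 + 2*(l:ℝ)) * Real.log 2 := by
    rw [Real.log_mul (by norm_num) (ne_of_gt h4pos),
      show (8:ℝ) = 2^3 by norm_num, show (4:ℝ) = 2^2 by norm_num, ← pow_mul,
      Real.log_pow, Real.log_pow]
    push_cast; ring
  have hlog2 : Real.log 2 < 0.6931471808 := Real.log_two_lt_d9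
  have hlog2' : (0:ℝ) < Real.log 2 := Real.log_pos (by norm_num)
  -- multiply hypothesis by 4^l
  have hmain : ((m:ℝ) - 1) ≤ 2*d*4^l * Real.log (1 + (m:ℝ)/d) := by
    have := mul_le_mul_of_nonneg_right h (le_of_lt h4pos)
    rw [mul_assoc, inv_mul_cancel₀ (ne_of_gt h4pos), mul_one] at this
    linarith
  -- combined log bound
  have hlogbd : Real.log (1 + (m:ℝ)/d)
      ≤ (1 + (m:ℝ)/d)/(8*4^l) + (3 + 2*(l:ℝ)) * Real.log 2 - 1 := by
    have := hlog1
    rw [hsplit, hlog8] at this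
    linarith
  have hmul : 2*(d:ℝ)*4^l * Real.log (1 + (m:ℝ)/d)
      ≤ 2*(d:ℝ)*4^l * ((1 + (m:ℝ)/d)/(8*4^l) + (3 + 2*(l:ℝ)) * Real.log 2 - 1) :=
    mul_le_mul_of_nonneg_left hlogbd (by positivity)
  have hsimp : 2*(d:ℝ)*4^l * ((1 + (m:ℝ)/d)/(8*4^l) + (3 + 2*(l:ℝ)) * Real.log 2 - 1)
      = ((d:ℝ) + m)/4 + 2*(d:ℝ)*4^l * ((3 + 2*(l:ℝ)) * Real.log 2 - 1) := by
    field_simp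
    ring
  have key : ((m:ℝ) - 1) ≤ ((d:ℝ) + m)/4 + 2*(d:ℝ)*4^l * ((3 + 2*(l:ℝ)) * Real.log 2 - 1) := by
    rw [← hsimp]; linarith
  -- numeric finish
  have hbr : (3 + 2*(l:ℝ)) * Real.log 2 - 1 ≤ 2.47 * (l:ℝ) := by
    nlinarith [mul_le_mul_of_nonneg_left hlog2.le (show (0:ℝ) ≤ 2*(l:ℝ) by linarith)]
  have hbr2 : 2*(d:ℝ)*4^l * ((3 + 2*(l:ℝ)) * Real.log 2 - 1)
      ≤ 2*(d:ℝ)*4^l * (2.47 * (l:ℝ)) :=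
    mul_le_mul_of_nonneg_left hbr (by positivity)
  nlinarith [mul_nonneg (mul_nonneg (sub_nonneg.2 hd1) (sub_nonneg.2 hl1)) h4pos.le,
    mul_nonneg (sub_nonneg.2 hd1) (sub_nonneg.2 h4),
    mul_nonneg (mul_nonneg hdpos.le (sub_nonneg.2 hl1)) (sub_nonneg.2 h4),
    mul_nonneg (mul_nonneg hdpos.le (sub_nonneg.2 hl1)) h4pos.le,
    mul_pos (mul_pos hdpos h4pos) (show (0:ℝ) < (l:ℝ) by linarith)]
end

section
/- Let d, m be positive integers, λ > 0 and R ≥ 0. Let φ₁, …, φ_m ∈ ℝ^d satisfy ‖φ_i‖₂ ≤ 1 for all i, and let r₁, …, r_m ∈ ℝ satisfy |r_i| ≤ R for all i. Define Σ = λ·I_d + Σ_{i=1}^{m} φ_i φ_iᵀ and w = Σ^{−1} Σ_{i=1}^{m} φ_i r_i. Then ‖w‖₂² ≤ m R² d / λ. -/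
open Matrix Finset

/-! Writing `A` for the matrix with rows `φ i`, the ridge estimate solves
`(λ I + Aᵀ A) w = Aᵀ r`. Pairing with `w` gives `λ ‖w‖² + ‖A w‖² = ⟨A w, r⟩`, and
`⟨a, r⟩ ≤ ‖a‖² + ‖r‖² / 4` then yields `λ ‖w‖² ≤ ‖r‖² / 4 ≤ m R² / 4`, which is at most
`m R² d` as soon as `d ≥ 1`. -/

namespace Matrix

variable {ι n : Type*} [Fintype ι]

theorem sum_vecMulVec_self_eq_transpose_mul (φ : ι → n → ℝ) :
    ∑ i, vecMulVec (φ i) (φ i) = (of φ)ᵀ * of φ := by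
  ext j k
  simp [sum_apply, mul_apply, vecMulVec_apply]

theorem posDef_smul_one_add_transpose_mul_self [Fintype n] [DecidableEq n] {lam : ℝ}
    (hlam : 0 < lam) (A : Matrix ι n ℝ) : (lam • (1 : Matrix n n ℝ) + Aᵀ * A).PosDef :=
  (PosDef.one.smul hlam).add_posSemidef (by
    simpa only [conjTranspose_eq_transpose_of_trivial] using posSemidef_conjTranspose_mul_self A)

theorem dotProduct_le_dotProduct_self_add (a r : ι → ℝ) : a ⬝ᵥ r ≤ a ⬝ᵥ a + r ⬝ᵥ r / 4 := by
  simp only [dotProduct, sum_div, ← sum_add_distrib]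
  exact sum_le_sum fun i _ => by nlinarith [sq_nonneg (a i - r i / 2)]

theorem dotProduct_self_le_card_mul_sq {r : ι → ℝ} {R : ℝ} (hr : ∀ i, |r i| ≤ R) :
    r ⬝ᵥ r ≤ Fintype.card ι * R ^ 2 := by
  calc r ⬝ᵥ r = ∑ i, r i ^ 2 := by simp only [dotProduct, sq]
    _ ≤ ∑ _i : ι, R ^ 2 :=
      sum_le_sum fun i _ => sq_le_sq' (neg_le_of_abs_le (hr i)) (le_of_abs_le (hr i))
    _ = Fintype.card ι * R ^ 2 := by simp

theorem mul_dotProduct_self_le_of_ridge [Fintype n] [DecidableEq n] {lam : ℝ}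
    {A : Matrix ι n ℝ} {r : ι → ℝ} {w : n → ℝ}
    (hw : (lam • (1 : Matrix n n ℝ) + Aᵀ * A) *ᵥ w = Aᵀ *ᵥ r) :
    lam * (w ⬝ᵥ w) ≤ r ⬝ᵥ r / 4 := by
  have hpair : lam * (w ⬝ᵥ w) + (A *ᵥ w) ⬝ᵥ (A *ᵥ w) = (A *ᵥ w) ⬝ᵥ r := by
    have := congrArg (w ⬝ᵥ ·) hw
    simpa only [add_mulVec, smul_mulVec, one_mulVec, ← mulVec_mulVec, dotProduct_add,
      dotProduct_smul, smul_eq_mul, dotProduct_mulVec w Aᵀ, vecMul_transpose] using this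
  linarith [dotProduct_le_dotProduct_self_add (A *ᵥ w) r]

end Matrix

theorem ridge_weight_norm_bound_general
    (d m : ℕ) (hd : 0 < d)
    (lam R : ℝ) (hlam : 0 < lam)
    (φ : Fin m → Fin d → ℝ)
    (r : Fin m → ℝ) (hr : ∀ i, |r i| ≤ R)
    (Sig : Matrix (Fin d) (Fin d) ℝ)
    (hSig : Sig = lam • (1 : Matrix (Fin d) (Fin d) ℝ)
        + ∑ i : Fin m, Matrix.vecMulVec (φ i) (φ i))
    (w : Fin d → ℝ)
    (hw : w = (Sig⁻¹).mulVec (∑ i : Fin m, r i • φ i)) :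
    w ⬝ᵥ w ≤ m * R ^ 2 * d / lam := by
  set A : Matrix (Fin m) (Fin d) ℝ := of φ
  rw [sum_vecMulVec_self_eq_transpose_mul] at hSig
  have hb : ∑ i, r i • φ i = Aᵀ *ᵥ r := by rw [mulVec_transpose, vecMul_eq_sum]; rfl
  have hSw : Sig *ᵥ w = Aᵀ *ᵥ r := by
    have hdet := (hSig ▸ posDef_smul_one_add_transpose_mul_self hlam A).det_pos
    rw [hw, hb, mulVec_mulVec, mul_nonsing_inv _ hdet.ne'.isUnit, one_mulVec]
  have hlamw := mul_dotProduct_self_le_of_ridge (hSig ▸ hSw)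
  have hrr : r ⬝ᵥ r ≤ m * R ^ 2 := by simpa using dotProduct_self_le_card_mul_sq hr
  have hmR : (0 : ℝ) ≤ m * R ^ 2 := by positivity
  rw [le_div_iff₀ hlam]
  calc w ⬝ᵥ w * lam ≤ r ⬝ᵥ r / 4 := by linarith
    _ ≤ m * R ^ 2 := by linarith
    _ ≤ m * R ^ 2 * d := le_mul_of_one_le_right (by positivity) (by exact_mod_cast hd)

/-- Norm bound on the ridge regression weight vector: if `‖φ_i‖₂ ≤ 1` and `|r_i| ≤ R`,
then the ridge estimate `w = Σ⁻¹ ∑ φ_i r_i` with `Σ = λ I + ∑ φ_i φ_iᵀ` satisfies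
`‖w‖₂² ≤ m R² d / λ`. -/
theorem ridge_weight_norm_bound
    (d m : ℕ) (hd : 0 < d) (hm : 0 < m)
    (lam R : ℝ) (hlam : 0 < lam) (hR : 0 ≤ R)
    (φ : Fin m → Fin d → ℝ) (hφ : ∀ i, Real.sqrt (φ i ⬝ᵥ φ i) ≤ 1)
    (r : Fin m → ℝ) (hr : ∀ i, |r i| ≤ R)
    (Sig : Matrix (Fin d) (Fin d) ℝ)
    (hSig : Sig = lam • (1 : Matrix (Fin d) (Fin d) ℝ)
        + ∑ i : Fin m, Matrix.vecMulVec (φ i) (φ i))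
    (w : Fin d → ℝ)
    (hw : w = (Sig⁻¹).mulVec (∑ i : Fin m, r i • φ i)) :
    w ⬝ᵥ w ≤ m * R ^ 2 * d / lam :=
  ridge_weight_norm_bound_general d m hd lam R hlam φ r hr Sig hSig w hw
end

section
/- Let S be a nonempty set, A a nonempty finite set, d and l positive integers, and let φ : S × A → ℝ^d satisfy ‖φ(s,a)‖₂ ≤ 1 for all (s,a). Let H > 0, β ≥ 0, B > 0 and ε > 0. Let 𝒱 be the set of all functions V : S → ℝ of the form V(s) = max_{a ∈ A} min_{1 ≤ i ≤ l} min{ H, ⟨w_i, φ(s,a)⟩ + β·√(φ(s,a)ᵀ Σ_i^{−1} φ(s,a)) }, where w₁, …, w_l ∈ ℝ^d satisfy ‖w_i‖₂ ≤ B and Σ₁, …, Σ_l are symmetric d×d matrices with Σ_i ⪰ I_d. Then there exists a finite set C of functions from S to ℝ such that every V ∈ 𝒱 has some V' ∈ C with sup_{s ∈ S} |V(s) − V'(s)| ≤ ε, and log |C| ≤ d·l·log(1 + 4B/ε) + d²·l·log(1 + 8√d·β²/ε²). -/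
/-!
With `M_i = β² Σ_i⁻¹`, every value function of the class is
`s ↦ max_a min_i min(H, ⟨w_i, φ(s,a)⟩ + √(φ(s,a)ᵀ M_i φ(s,a)))`. From `Σ_i ⪰ I` one gets
`‖Σ_i⁻¹ x‖² ≤ ⟨Σ_i⁻¹ x, x⟩ ≤ ‖Σ_i⁻¹ x‖ ‖x‖`, so `Σ_i⁻¹` is a contraction, its columns have
norm at most `1`, and `‖M_i‖_F ≤ β² √d`. Since `|√a - √b| ≤ √|a - b|` and `max`, `min` are
1-Lipschitz, moving each `w_i` by `ε/2` and each `M_i` by `ε²/4` in Frobenius norm moves the value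
function by at most `ε` in sup distance. It remains to cover the Euclidean balls of radii `B` (in
`ℝ^d`) and `β² √d` (in `ℝ^{d×d}`) by nets of precision `ε/2` and `ε²/4`. A maximal `δ`-separated
subset of a ball of radius `R` is such a net, and comparing the volume of the disjoint `δ/2`-balls
around its points with that of the ball of radius `R + δ/2` bounds its size by `(1 + 2R/δ)^dim`.
-/

open Matrix Finset Metric MeasureTheory Module WithLp
open scoped NNReal ENNReal

attribute [local instance] Matrix.frobeniusNormedAddCommGroup Matrix.frobeniusNormedSpace

section Packing

variable {E : Type*} [NormedAddCommGroup E] [NormedSpace ℝ E] [FiniteDimensional ℝ E]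

theorem card_le_of_isSeparated_of_subset_closedBall {R : ℝ} {δ : ℝ≥0} (hR : 0 ≤ R)
    (hδ : 0 < δ) {T : Finset E} (hTR : (T : Set E) ⊆ closedBall 0 R)
    (hT : IsSeparated δ (T : Set E)) :
    (T.card : ℝ) ≤ (1 + 2 * R / δ) ^ finrank ℝ E := by
  borelize E
  set μ : Measure E := Measure.addHaar
  set r : ℝ := δ / 2 with hr_def
  have hr : 0 < r := by positivity
  have hdisj : (T : Set E).PairwiseDisjoint fun x => ball x r := fun x hx y hy hxy => by
    refine ball_disjoint_ball ?_
    have hxy : (δ : ℝ≥0∞) < edist x y := hT hx hy hxy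
    rw [← not_le, edist_le_coe, not_le, ← NNReal.coe_lt_coe, coe_nndist] at hxy
    linarith [hr_def]
  have hsub : (⋃ x ∈ T, ball x r) ⊆ closedBall 0 (R + r) := by
    simp only [Set.iUnion_subset_iff]
    intro x hx y hy
    have hx' := hTR hx
    rw [mem_closedBall] at hx' ⊢
    rw [mem_ball] at hy
    linarith [dist_triangle y x 0]
  have hball : μ (ball 0 1) ≠ 0 := (measure_ball_pos μ _ one_pos).ne'
  have hvol : (T.card : ℝ≥0∞) * ENNReal.ofReal (r ^ finrank ℝ E) * μ (ball 0 1) ≤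
      ENNReal.ofReal ((R + r) ^ finrank ℝ E) * μ (ball 0 1) :=
    calc (T.card : ℝ≥0∞) * ENNReal.ofReal (r ^ finrank ℝ E) * μ (ball 0 1)
        = ∑ x ∈ T, μ (ball x r) := by
          simp [Measure.addHaar_ball_of_pos μ _ hr, mul_assoc]
      _ = μ (⋃ x ∈ T, ball x r) := (measure_biUnion_finset hdisj fun _ _ => measurableSet_ball).symm
      _ ≤ μ (closedBall 0 (R + r)) := measure_mono hsub
      _ = _ := Measure.addHaar_closedBall μ _ (by positivity)
  have hvol' := (ENNReal.mul_le_mul_iff_left hball measure_ball_lt_top.ne).mp hvol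
  rw [← ENNReal.ofReal_natCast, ← ENNReal.ofReal_mul (by positivity),
    ENNReal.ofReal_le_ofReal_iff (by positivity), ← le_div_iff₀ (by positivity), ← div_pow] at hvol'
  refine hvol'.trans_eq ?_
  rw [add_div, div_self hr.ne', hr_def]
  ring

theorem packingNumber_closedBall_le {R : ℝ} {δ : ℝ≥0} (hR : 0 ≤ R) (hδ : 0 < δ) :
    packingNumber δ (closedBall (0 : E) R) ≤ ⌊(1 + 2 * R / δ) ^ finrank ℝ E⌋₊ := by
  set N := ⌊(1 + 2 * R / δ) ^ finrank ℝ E⌋₊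
  refine iSup₂_le fun C hCR => iSup_le fun hC => ?_
  by_contra! hlt
  obtain ⟨t, htC, ht⟩ := Set.exists_subset_encard_eq (Order.add_one_le_of_lt hlt)
  have htfin : t.Finite := Set.finite_of_encard_eq_coe (k := N + 1) (by exact_mod_cast ht)
  rw [htfin.encard_eq_coe_toFinset_card] at ht
  have hcard := card_le_of_isSeparated_of_subset_closedBall hR hδ
    (T := htfin.toFinset) (by simpa using htC.trans hCR) (by simpa using hC.subset htC)
  rw [show htfin.toFinset.card = N + 1 by exact_mod_cast ht, Nat.cast_add_one] at hcard
  exact (Nat.lt_floor_add_one _).not_ge hcard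

theorem exists_finset_isCover_closedBall {R : ℝ} {δ : ℝ≥0} (hR : 0 ≤ R) (hδ : 0 < δ) :
    ∃ T : Finset E, IsCover δ (closedBall 0 R) (T : Set E) ∧
      (T.card : ℝ) ≤ (1 + 2 * R / δ) ^ finrank ℝ E := by
  have hpack := packingNumber_closedBall_le (E := E) hR hδ
  have hfin : packingNumber δ (closedBall (0 : E) R) ≠ ⊤ :=
    (hpack.trans_lt (ENat.natCast_lt_top _)).ne
  have hN := Set.finite_of_encard_le_coe ((encard_maximalSeparatedSet hfin).trans_le hpack)
  refine ⟨hN.toFinset, by simpa using isCover_maximalSeparatedSet hfin, ?_⟩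
  rw [← encard_maximalSeparatedSet hfin, hN.encard_eq_coe_toFinset_card] at hpack
  exact (Nat.cast_le.mpr (by exact_mod_cast hpack)).trans (Nat.floor_le (by positivity))

end Packing

theorem Metric.IsCover.exists_norm_sub_le {E : Type*} [SeminormedAddCommGroup E] {δ : ℝ≥0}
    {s N : Set E} (h : IsCover δ s N) {x : E} (hx : x ∈ s) : ∃ y ∈ N, ‖x - y‖ ≤ δ := by
  obtain ⟨y, hy, hxy⟩ := h hx
  refine ⟨y, hy, ?_⟩
  rw [← dist_eq_norm, ← coe_nndist, NNReal.coe_le_coe, ← edist_le_coe]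
  exact hxy

section EuclideanDotProduct

variable {n : Type*} [Fintype n]

theorem dotProduct_eq_inner_toLp (x y : n → ℝ) : x ⬝ᵥ y = inner ℝ (toLp 2 x) (toLp 2 y) := by
  rw [EuclideanSpace.inner_toLp_toLp, star_trivial, dotProduct_comm]

theorem norm_toLp_eq_sqrt_dotProduct (x : n → ℝ) : ‖toLp 2 x‖ = √(x ⬝ᵥ x) := by
  rw [norm_eq_sqrt_real_inner, dotProduct_eq_inner_toLp]

theorem dotProduct_self_eq_norm_toLp_sq (x : n → ℝ) : x ⬝ᵥ x = ‖toLp 2 x‖ ^ 2 := by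
  rw [dotProduct_eq_inner_toLp, real_inner_self_eq_norm_sq]

theorem abs_dotProduct_le_norm_toLp_mul (x y : n → ℝ) :
    |x ⬝ᵥ y| ≤ ‖toLp 2 x‖ * ‖toLp 2 y‖ := by
  rw [dotProduct_eq_inner_toLp]
  exact abs_real_inner_le_norm _ _

theorem norm_toLp_mulVec_le_frobenius (N : Matrix n n ℝ) (x : n → ℝ) :
    ‖toLp 2 (N *ᵥ x)‖ ≤ ‖N‖ * ‖toLp 2 x‖ := by
  rw [← frobenius_norm_replicateCol (ι := Unit), ← frobenius_norm_replicateCol (ι := Unit),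
    replicateCol_mulVec]
  exact frobenius_norm_mul _ _

theorem abs_dotProduct_mulVec_le_frobenius (N : Matrix n n ℝ) (x : n → ℝ) :
    |x ⬝ᵥ N *ᵥ x| ≤ ‖N‖ * ‖toLp 2 x‖ ^ 2 :=
  calc |x ⬝ᵥ N *ᵥ x| ≤ ‖toLp 2 x‖ * ‖toLp 2 (N *ᵥ x)‖ := abs_dotProduct_le_norm_toLp_mul _ _
    _ ≤ ‖toLp 2 x‖ * (‖N‖ * ‖toLp 2 x‖) := by gcongr; exact norm_toLp_mulVec_le_frobenius N x
    _ = ‖N‖ * ‖toLp 2 x‖ ^ 2 := by ring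

end EuclideanDotProduct

section LoewnerGeOne

variable {n : Type*} [Fintype n] [DecidableEq n] {Γ : Matrix n n ℝ}

theorem dotProduct_self_le_dotProduct_mulVec (hΓ : (Γ - 1).PosSemidef) (x : n → ℝ) :
    x ⬝ᵥ x ≤ x ⬝ᵥ Γ *ᵥ x := by
  have := hΓ.dotProduct_mulVec_nonneg x
  rw [star_trivial, sub_mulVec, one_mulVec, dotProduct_sub] at this
  linarith

theorem mul_nonsing_inv_of_posSemidef_sub_one (hΓ : (Γ - 1).PosSemidef) : Γ * Γ⁻¹ = 1 := by
  have hpos : Γ.PosDef := by simpa using PosDef.posSemidef_add hΓ PosDef.one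
  exact mul_nonsing_inv Γ ((isUnit_iff_isUnit_det Γ).mp hpos.isUnit)

theorem norm_toLp_inv_mulVec_le (hΓ : (Γ - 1).PosSemidef) (x : n → ℝ) :
    ‖toLp 2 (Γ⁻¹ *ᵥ x)‖ ≤ ‖toLp 2 x‖ := by
  set z := Γ⁻¹ *ᵥ x
  have hz : Γ *ᵥ z = x := by
    rw [mulVec_mulVec, mul_nonsing_inv_of_posSemidef_sub_one hΓ, one_mulVec]
  have : ‖toLp 2 z‖ ^ 2 ≤ ‖toLp 2 x‖ * ‖toLp 2 z‖ :=
    calc ‖toLp 2 z‖ ^ 2 = z ⬝ᵥ z := (dotProduct_self_eq_norm_toLp_sq z).symm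
      _ ≤ z ⬝ᵥ x := hz ▸ dotProduct_self_le_dotProduct_mulVec hΓ z
      _ ≤ ‖toLp 2 z‖ * ‖toLp 2 x‖ := (le_abs_self _).trans (abs_dotProduct_le_norm_toLp_mul z x)
      _ = _ := mul_comm _ _
  nlinarith [norm_nonneg (toLp 2 z), norm_nonneg (toLp 2 x)]

theorem frobenius_norm_inv_le_sqrt_card (hΓ : (Γ - 1).PosSemidef) :
    ‖Γ⁻¹‖ ≤ √(Fintype.card n) := by
  have hcol (j : n) : ∑ i, Γ⁻¹ i j ^ 2 ≤ 1 := by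
    have := pow_le_pow_left₀ (norm_nonneg _) (norm_toLp_inv_mulVec_le hΓ (Pi.single j 1)) 2
    rw [← dotProduct_self_eq_norm_toLp_sq, ← dotProduct_self_eq_norm_toLp_sq, mulVec_single_one,
      dotProduct_single, Pi.single_eq_same, one_mul] at this
    simpa [dotProduct, sq] using this
  rw [frobenius_norm_def, ← Real.sqrt_eq_rpow, Real.sqrt_le_sqrt_iff (by positivity)]
  calc ∑ i, ∑ j, ‖Γ⁻¹ i j‖ ^ (2 : ℝ) = ∑ j, ∑ i, Γ⁻¹ i j ^ 2 := by
        rw [sum_comm]; simp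
    _ ≤ ∑ _j : n, (1 : ℝ) := sum_le_sum fun j _ => hcol j
    _ = Fintype.card n := by simp

end LoewnerGeOne

theorem Real.abs_sqrt_sub_sqrt_le (a b : ℝ) : |√a - √b| ≤ √|a - b| := by
  wlog hba : b ≤ a generalizing a b
  · rw [abs_sub_comm, abs_sub_comm a]
    exact this b a (le_of_not_ge hba)
  rw [abs_of_nonneg (sub_nonneg.2 (Real.sqrt_le_sqrt hba)), abs_of_nonneg (sub_nonneg.2 hba),
    sub_le_iff_le_add, Real.sqrt_le_left (by positivity)]
  have hb : b ≤ √b ^ 2 := by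
    rcases le_total 0 b with hb | hb
    · rw [Real.sq_sqrt hb]
    · rw [Real.sqrt_eq_zero_of_nonpos hb]; simpa using hb
  nlinarith [Real.sq_sqrt (sub_nonneg.2 hba), Real.sqrt_nonneg (a - b), Real.sqrt_nonneg b]

theorem abs_ciSup_sub_ciSup_le {ι : Type*} [Finite ι] {f g : ι → ℝ} {c : ℝ} (hc : 0 ≤ c)
    (h : ∀ i, |f i - g i| ≤ c) : |(⨆ i, f i) - ⨆ i, g i| ≤ c := by
  rcases isEmpty_or_nonempty ι with hι | hι
  · simpa using hc
  have key (f g : ι → ℝ) (h : ∀ i, f i - g i ≤ c) : (⨆ i, f i) - ⨆ i, g i ≤ c :=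
    sub_le_iff_le_add.2 <| ciSup_le fun i => by
      linarith [h i, le_ciSup (Set.finite_range g).bddAbove i]
  exact abs_sub_le_iff.2 ⟨key f g fun i => (abs_sub_le_iff.1 (h i)).1,
    key g f fun i => (abs_sub_le_iff.1 (h i)).2⟩

theorem abs_ciInf_sub_ciInf_le {ι : Type*} [Finite ι] {f g : ι → ℝ} {c : ℝ} (hc : 0 ≤ c)
    (h : ∀ i, |f i - g i| ≤ c) : |(⨅ i, f i) - ⨅ i, g i| ≤ c := by
  rcases isEmpty_or_nonempty ι with hι | hι
  · simpa using hc
  have key (f g : ι → ℝ) (h : ∀ i, f i - g i ≤ c) : (⨅ i, f i) - ⨅ i, g i ≤ c :=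
    sub_le_comm.1 <| le_ciInf fun i => by
      linarith [h i, ciInf_le (Set.finite_range f).bddBelow i]
  exact abs_sub_le_iff.2 ⟨key f g fun i => (abs_sub_le_iff.1 (h i)).1,
    key g f fun i => (abs_sub_le_iff.1 (h i)).2⟩

theorem Real.log_natCast_le_log {n : ℕ} {x : ℝ} (h : (n : ℝ) ≤ x) (hx : 1 ≤ x) :
    Real.log n ≤ Real.log x := by
  rcases n.eq_zero_or_pos with rfl | hn
  · simpa using Real.log_nonneg hx
  · exact Real.log_le_log (by exact_mod_cast hn) h

section TruncatedValue

variable {S A ι n : Type*} [Fintype n]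

/-- `Real.sqrt` vanishes on negative numbers, so this is meaningful (and Lipschitz in `M`) for all
matrices `M i`, not only positive semidefinite ones; the nets below need that. -/
noncomputable def truncatedValue (φ : S → A → n → ℝ) (H : ℝ) (w : ι → n → ℝ) (M : ι → Matrix n n ℝ)
    (s : S) : ℝ :=
  ⨆ a, ⨅ i, min H (w i ⬝ᵥ φ s a + √(φ s a ⬝ᵥ M i *ᵥ φ s a))

theorem sqrt_dotProduct_sq_smul_mulVec {c : ℝ} (hc : 0 ≤ c) (N : Matrix n n ℝ) (v : n → ℝ) :
    √(v ⬝ᵥ (c ^ 2 • N) *ᵥ v) = c * √(v ⬝ᵥ N *ᵥ v) := by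
  rw [smul_mulVec, dotProduct_smul, smul_eq_mul, Real.sqrt_mul (sq_nonneg c), Real.sqrt_sq hc]

theorem abs_dotProduct_add_sqrt_sub_le {v w w' : n → ℝ} {M M' : Matrix n n ℝ} {δ : ℝ}
    (hv : ‖toLp 2 v‖ ≤ 1) (hw : ‖toLp 2 (w - w')‖ ≤ δ) (hM : ‖M - M'‖ ≤ δ ^ 2) :
    |(w ⬝ᵥ v + √(v ⬝ᵥ M *ᵥ v)) - (w' ⬝ᵥ v + √(v ⬝ᵥ M' *ᵥ v))| ≤ 2 * δ := by
  have hδ : 0 ≤ δ := (norm_nonneg _).trans hw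
  have hlin : |w ⬝ᵥ v - w' ⬝ᵥ v| ≤ δ :=
    calc |w ⬝ᵥ v - w' ⬝ᵥ v| = |(w - w') ⬝ᵥ v| := by rw [sub_dotProduct]
      _ ≤ ‖toLp 2 (w - w')‖ * ‖toLp 2 v‖ := abs_dotProduct_le_norm_toLp_mul _ _
      _ ≤ δ * 1 := mul_le_mul hw hv (norm_nonneg _) hδ
      _ = δ := mul_one δ
  have hquad : |√(v ⬝ᵥ M *ᵥ v) - √(v ⬝ᵥ M' *ᵥ v)| ≤ δ :=
    calc _ ≤ √|v ⬝ᵥ M *ᵥ v - v ⬝ᵥ M' *ᵥ v| := Real.abs_sqrt_sub_sqrt_le _ _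
      _ = √|v ⬝ᵥ (M - M') *ᵥ v| := by rw [sub_mulVec, dotProduct_sub]
      _ ≤ √(δ ^ 2 * 1 ^ 2) :=
        Real.sqrt_le_sqrt ((abs_dotProduct_mulVec_le_frobenius _ _).trans (by gcongr))
      _ = δ := by simp [Real.sqrt_sq hδ]
  calc _ = |(w ⬝ᵥ v - w' ⬝ᵥ v) + (√(v ⬝ᵥ M *ᵥ v) - √(v ⬝ᵥ M' *ᵥ v))| := by ring_nf
    _ ≤ δ + δ := (abs_add_le _ _).trans (add_le_add hlin hquad)
    _ = 2 * δ := by ring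

theorem abs_truncatedValue_sub_le [Finite A] [Finite ι] {φ : S → A → n → ℝ}
    (hφ : ∀ s a, ‖toLp 2 (φ s a)‖ ≤ 1) (H : ℝ) {w w' : ι → n → ℝ} {M M' : ι → Matrix n n ℝ}
    {δ : ℝ} (hδ : 0 ≤ δ) (hw : ∀ i, ‖toLp 2 (w i - w' i)‖ ≤ δ)
    (hM : ∀ i, ‖M i - M' i‖ ≤ δ ^ 2) (s : S) :
    |truncatedValue φ H w M s - truncatedValue φ H w' M' s| ≤ 2 * δ :=
  abs_ciSup_sub_ciSup_le (by positivity) fun a => abs_ciInf_sub_ciInf_le (by positivity) fun i =>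
    (abs_min_sub_min_le_max H _ H _).trans <| max_le (by simpa using hδ)
      (abs_dotProduct_add_sqrt_sub_le (hφ s a) (hw i) (hM i))

theorem exists_finset_cover_truncatedValue [Finite A] [Fintype ι]
    {φ : S → A → n → ℝ} (hφ : ∀ s a, ‖toLp 2 (φ s a)‖ ≤ 1) (H : ℝ) {R₁ R₂ δ : ℝ}
    (hR₁ : 0 ≤ R₁) (hR₂ : 0 ≤ R₂) (hδ : 0 < δ) :
    ∃ C : Finset (S → ℝ),
      (∀ (w : ι → n → ℝ) (M : ι → Matrix n n ℝ), (∀ i, ‖toLp 2 (w i)‖ ≤ R₁) → (∀ i, ‖M i‖ ≤ R₂) →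
        ∃ V' ∈ C, ∀ s, |truncatedValue φ H w M s - V' s| ≤ 2 * δ) ∧
      (C.card : ℝ) ≤ ((1 + 2 * R₁ / δ) ^ Fintype.card n *
        (1 + 2 * R₂ / δ ^ 2) ^ (Fintype.card n * Fintype.card n)) ^ Fintype.card ι := by
  classical
  lift δ to ℝ≥0 using hδ.le
  replace hδ : 0 < δ := mod_cast hδ
  obtain ⟨Tw, hTw, hTw_card⟩ := exists_finset_isCover_closedBall (E := EuclideanSpace ℝ n) hR₁ hδ
  obtain ⟨TM, hTM, hTM_card⟩ :=
    exists_finset_isCover_closedBall (E := Matrix n n ℝ) hR₂ (pow_pos hδ 2)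
  let V (p : (ι → EuclideanSpace ℝ n) × (ι → Matrix n n ℝ)) : S → ℝ :=
    truncatedValue φ H (fun i => ofLp (p.1 i)) p.2
  refine ⟨((Fintype.piFinset fun _ => Tw) ×ˢ (Fintype.piFinset fun _ => TM)).image V, ?_, ?_⟩
  · intro w M hw hM
    choose u hu hwu using fun i => hTw.exists_norm_sub_le (mem_closedBall_zero_iff.2 (hw i))
    choose M' hM' hMM' using fun i => hTM.exists_norm_sub_le (mem_closedBall_zero_iff.2 (hM i))
    refine ⟨V (u, M'), mem_image_of_mem _ (mem_product.2
      ⟨Fintype.mem_piFinset.2 hu, Fintype.mem_piFinset.2 hM'⟩), fun s => ?_⟩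
    exact abs_truncatedValue_sub_le hφ H δ.2 (fun i => by simpa using hwu i)
      (fun i => by simpa using hMM' i) s
  · rw [finrank_euclideanSpace] at hTw_card
    rw [Module.finrank_matrix, Module.finrank_self, mul_one, NNReal.coe_pow] at hTM_card
    calc _ ≤ (((Fintype.piFinset fun _ => Tw) ×ˢ (Fintype.piFinset fun _ => TM)).card : ℝ) :=
          Nat.cast_le.2 card_image_le
      _ = ((Tw.card : ℝ) * TM.card) ^ Fintype.card ι := by
          simp [card_product, Fintype.card_piFinset, mul_pow]
      _ ≤ _ := by gcongr

end TruncatedValue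

theorem value_class_covering_number_general
    {S : Type*} {A : Type*} [Fintype A]
    (d l : ℕ)
    (φ : S → A → Fin d → ℝ) (hφ : ∀ s a, Real.sqrt (φ s a ⬝ᵥ φ s a) ≤ 1)
    (H β B ε : ℝ) (hβ : 0 ≤ β) (hB : 0 < B) (hε : 0 < ε)
    (𝒱 : Set (S → ℝ))
    (h𝒱 : 𝒱 = {V | ∃ w : Fin l → Fin d → ℝ, ∃ Γ : Fin l → Matrix (Fin d) (Fin d) ℝ,
      (∀ i, Real.sqrt (w i ⬝ᵥ w i) ≤ B) ∧
      (∀ i, (Γ i).IsSymm ∧ (Γ i - 1).PosSemidef) ∧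
      ∀ s, V s = ⨆ a : A, ⨅ i : Fin l,
        min H (w i ⬝ᵥ φ s a
          + β * Real.sqrt (φ s a ⬝ᵥ ((Γ i)⁻¹).mulVec (φ s a)))}) :
    ∃ C : Finset (S → ℝ),
      (∀ V ∈ 𝒱, ∃ V' ∈ C, ∀ s, |V s - V' s| ≤ ε) ∧
      Real.log C.card ≤ d * l * Real.log (1 + 4 * B / ε)
        + d ^ 2 * l * Real.log (1 + 8 * Real.sqrt d * β ^ 2 / ε ^ 2) := by
  obtain ⟨C, hC, hC_card⟩ := exists_finset_cover_truncatedValue (ι := Fin l)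
    (fun s a => (norm_toLp_eq_sqrt_dotProduct (φ s a)).trans_le (hφ s a)) H
    (R₁ := B) (R₂ := β ^ 2 * √d) (δ := ε / 2) hB.le (by positivity) (by positivity)
  refine ⟨C, ?_, ?_⟩
  · rw [h𝒱]
    rintro V ⟨w, Γ, hw, hΓ, hV⟩
    obtain ⟨V', hV', hVV'⟩ := hC w (fun i => β ^ 2 • (Γ i)⁻¹)
      (fun i => (norm_toLp_eq_sqrt_dotProduct _).trans_le (hw i))
      (fun i => by
        rw [norm_smul_of_nonneg (sq_nonneg β)]
        simpa using mul_le_mul_of_nonneg_left (frobenius_norm_inv_le_sqrt_card (hΓ i).2)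
          (sq_nonneg β))
    refine ⟨V', hV', fun s => ?_⟩
    simpa [hV, truncatedValue, sqrt_dotProduct_sq_smul_mulVec hβ] using
      (hVV' s).trans_eq (mul_div_cancel₀ ε two_ne_zero)
  · have hK₁ : 1 + 2 * B / (ε / 2) = 1 + 4 * B / ε := by field_simp; ring
    have hK₂ : 1 + 2 * (β ^ 2 * √d) / (ε / 2) ^ 2 = 1 + 8 * √d * β ^ 2 / ε ^ 2 := by
      field_simp; ring
    rw [Fintype.card_fin, Fintype.card_fin, hK₁, hK₂] at hC_card
    calc Real.log C.card
        ≤ Real.log (((1 + 4 * B / ε) ^ d * (1 + 8 * √d * β ^ 2 / ε ^ 2) ^ (d * d)) ^ l) :=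
          Real.log_natCast_le_log hC_card (one_le_pow₀ (one_le_mul_of_one_le_of_one_le
            (one_le_pow₀ (le_add_of_nonneg_right (by positivity)))
            (one_le_pow₀ (le_add_of_nonneg_right (by positivity)))))
      _ = _ := by
          rw [Real.log_pow, Real.log_mul (by positivity) (by positivity), Real.log_pow,
            Real.log_pow]
          push_cast
          ring

/-- Covering number bound for the class of max-min truncated optimistic value
functions: there is an `ε`-cover `C` (w.r.t. the sup distance) with
`log |C| ≤ d l log(1 + 4B/ε) + d² l log(1 + 8√d β²/ε²)`. -/
theorem value_class_covering_number
    {S : Type*} [Nonempty S] {A : Type*} [Fintype A] [Nonempty A]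
    (d l : ℕ) (hd : 0 < d) (hl : 0 < l)
    (φ : S → A → Fin d → ℝ) (hφ : ∀ s a, Real.sqrt (φ s a ⬝ᵥ φ s a) ≤ 1)
    (H β B ε : ℝ) (hH : 0 < H) (hβ : 0 ≤ β) (hB : 0 < B) (hε : 0 < ε)
    (𝒱 : Set (S → ℝ))
    (h𝒱 : 𝒱 = {V | ∃ w : Fin l → Fin d → ℝ, ∃ Γ : Fin l → Matrix (Fin d) (Fin d) ℝ,
      (∀ i, Real.sqrt (w i ⬝ᵥ w i) ≤ B) ∧
      (∀ i, (Γ i).IsSymm ∧ (Γ i - 1).PosSemidef) ∧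
      ∀ s, V s = ⨆ a : A, ⨅ i : Fin l,
        min H (w i ⬝ᵥ φ s a
          + β * Real.sqrt (φ s a ⬝ᵥ ((Γ i)⁻¹).mulVec (φ s a)))}) :
    ∃ C : Finset (S → ℝ),
      (∀ V ∈ 𝒱, ∃ V' ∈ C, ∀ s, |V s - V' s| ≤ ε) ∧
      Real.log C.card ≤ d * l * Real.log (1 + 4 * B / ε)
        + d ^ 2 * l * Real.log (1 + 8 * Real.sqrt d * β ^ 2 / ε ^ 2) :=
  value_class_covering_number_general d l φ hφ H β B ε hβ hB hε 𝒱 h𝒱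
end

section
/- Let (Δ_k)_{k≥1} be a sequence of nonnegative real numbers and let C₁, C₂ ≥ 0. Suppose that for every ε > 0, the number of indices k ≥ 1 with Δ_k > ε is finite and at most C₁/ε + C₂/ε². Then: (i) Δ_k → 0 as k → ∞; and (ii) for every positive integer K, Σ_{k=1}^{K} Δ_k ≤ C₁·(1 + log K) + 2·√(C₂·K), where log is the natural logarithm. -/
open Finset Filter

/-! If `ε < d` implies that at least `n` of the gaps exceed `ε`, then `n ≤ C₁/ε + C₂/ε²` for all
`ε < d`, which forces `d ≤ C₁/n + √(C₂/n)`. The `m`-th largest of `Δ_1, …, Δ_K` is reached or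
exceeded by `m` of them, so it is at most `C₁/m + √(C₂/m)`; summing over `m` gives
`C₁ ∑ 1/m + √C₂ ∑ 1/√m ≤ C₁ (1 + log K) + 2 √(C₂ K)`. Convergence holds because only finitely
many gaps exceed any `ε > 0`. -/

theorem Finset.sum_le_sum_Icc_of_le_card_filter_le {ι α : Type*} [AddCommMonoid α] [LinearOrder α]
    [IsOrderedAddMonoid α] {s : Finset ι} {f : ι → α} {g : ℕ → α}
    (hg : AntitoneOn g (Set.Ici 1)) (hf : ∀ x ∈ s, f x ≤ g #{y ∈ s | f x ≤ f y}) :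
    ∑ x ∈ s, f x ≤ ∑ m ∈ Icc 1 #s, g m := by
  classical
  induction s using Finset.induction_on_min_value f with
  | empty => simp
  | insert a s ha hmin ih =>
    have one_le_card {t : Finset ι} {x : ι} (hx : x ∈ t) : 1 ≤ #{y ∈ t | f x ≤ f y} :=
      card_pos.2 ⟨x, mem_filter.2 ⟨hx, le_rfl⟩⟩
    have hs : ∑ x ∈ s, f x ≤ ∑ m ∈ Icc 1 #s, g m := ih fun x hx =>
      (hf x (mem_insert_of_mem hx)).trans <|
        hg (one_le_card hx) (one_le_card (mem_insert_of_mem hx))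
          (card_le_card (filter_subset_filter _ (subset_insert a s)))
    have ha' : f a ≤ g (#s + 1) := by
      have := hf a (mem_insert_self a s)
      rwa [filter_true_of_mem fun y hy => (mem_insert.1 hy).elim (fun h => h ▸ le_rfl) (hmin y),
        card_insert_of_notMem ha] at this
    rw [sum_insert ha, card_insert_of_notMem ha, sum_Icc_succ_top (by omega), add_comm]
    exact add_le_add hs ha'

theorem le_div_add_sqrt_div_of_forall_le {C₁ C₂ n d : ℝ} (hC₁ : 0 ≤ C₁) (hC₂ : 0 ≤ C₂)
    (hn : 0 < n) (h : ∀ ε, 0 < ε → ε < d → n ≤ C₁ / ε + C₂ / ε ^ 2) :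
    d ≤ C₁ / n + √(C₂ / n) := by
  set a := C₁ / n
  set b := √(C₂ / n)
  by_contra! hd
  obtain ⟨ε, haε, hεd⟩ := exists_between hd
  have ha : 0 ≤ a := by positivity
  have hb : 0 ≤ b := Real.sqrt_nonneg _
  have hε : 0 < ε := by linarith
  have hbε : b ≤ ε := by linarith
  -- `ε² - aε - b² = ε (ε - (a + b)) + b (ε - b)`
  have hlt : a * ε + b ^ 2 < ε ^ 2 := by
    linarith [mul_pos hε (sub_pos.2 haε), mul_nonneg hb (sub_nonneg.2 hbε)]
  have hsplit : C₁ / ε + C₂ / ε ^ 2 = n * ((a * ε + b ^ 2) / ε ^ 2) := by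
    rw [Real.sq_sqrt (by positivity)]
    simp only [a]
    field_simp
  have hcount := h ε hε hεd
  rw [hsplit] at hcount
  exact hcount.not_gt (mul_lt_of_lt_one_right hn ((div_lt_one (by positivity)).2 hlt))

theorem antitoneOn_div_add_sqrt_div {C₁ C₂ : ℝ} (hC₁ : 0 ≤ C₁) (hC₂ : 0 ≤ C₂) :
    AntitoneOn (fun m : ℕ => C₁ / m + √(C₂ / m)) (Set.Ici 1) := by
  intro m hm n _ hmn
  have hm : (0 : ℝ) < m := by exact_mod_cast hm
  have hmn : (m : ℝ) ≤ n := by exact_mod_cast hmn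
  dsimp only
  gcongr

theorem sum_Icc_inv_sqrt_le (K : ℕ) : ∑ m ∈ Icc 1 K, (√m)⁻¹ ≤ 2 * √K := by
  induction K with
  | zero => simp
  | succ K ih =>
    -- `1 ≤ 2 √(K+1) (√(K+1) - √K)` because `√K ≤ √(K+1)` and `√(K+1)² = K + 1`
    have step : (√(K + 1 : ℝ))⁻¹ ≤ 2 * √(K + 1 : ℝ) - 2 * √K := by
      have hK : √(K : ℝ) ^ 2 = K := Real.sq_sqrt (Nat.cast_nonneg K)
      have hK1 : √(K + 1 : ℝ) ^ 2 = K + 1 := Real.sq_sqrt (by positivity)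
      rw [inv_le_iff_one_le_mul₀ (by positivity)]
      nlinarith [sq_nonneg (√(K + 1 : ℝ) - √K)]
    rw [sum_Icc_succ_top (by omega)]
    push_cast
    linarith

theorem sum_Icc_inv_le_one_add_log (K : ℕ) : ∑ m ∈ Icc 1 K, (m : ℝ)⁻¹ ≤ 1 + Real.log K := by
  have := harmonic_le_one_add_log K
  rw [harmonic_eq_sum_Icc] at this
  push_cast at this
  exact this

theorem sum_Icc_div_add_sqrt_div_le {C₁ C₂ : ℝ} (hC₁ : 0 ≤ C₁) (hC₂ : 0 ≤ C₂) (K : ℕ) :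
    ∑ m ∈ Icc 1 K, (C₁ / m + √(C₂ / m)) ≤ C₁ * (1 + Real.log K) + 2 * √(C₂ * K) := by
  calc ∑ m ∈ Icc 1 K, (C₁ / m + √(C₂ / m))
      = C₁ * ∑ m ∈ Icc 1 K, (m : ℝ)⁻¹ + √C₂ * ∑ m ∈ Icc 1 K, (√m)⁻¹ := by
        simp only [Real.sqrt_div hC₂]
        simp only [sum_add_distrib, mul_sum, div_eq_mul_inv]
    _ ≤ C₁ * (1 + Real.log K) + √C₂ * (2 * √K) := by
        gcongr
        exacts [sum_Icc_inv_le_one_add_log K, sum_Icc_inv_sqrt_le K]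
    _ = C₁ * (1 + Real.log K) + 2 * √(C₂ * K) := by
        rw [Real.sqrt_mul hC₂]
        ring

theorem tendsto_zero_of_nonneg_of_finite_setOf_lt {u : ℕ → ℝ} (hu : ∀ k, 0 ≤ u k)
    (h : ∀ ε, 0 < ε → {k | ε < u k}.Finite) : Tendsto u atTop (nhds 0) := by
  refine tendsto_order.2 ⟨fun a ha => .of_forall fun k => ha.trans_le (hu k), fun a ha => ?_⟩
  have hfin := (h (a / 2) (half_pos ha)).eventually_cofinite_notMem
  rw [Nat.cofinite_eq_atTop] at hfin
  filter_upwards [hfin] with k hk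
  linarith [not_lt.1 hk]

/-- Deterministic core of "uniform-PAC implies convergence and regret":
if for every `ε > 0` the number of indices `k ≥ 1` with `Δ_k > ε` is finite and
at most `C₁/ε + C₂/ε²`, then `Δ_k → 0` and
`∑_{k=1}^K Δ_k ≤ C₁ (1 + log K) + 2 √(C₂ K)` for all `K ≥ 1`. -/
theorem uniform_pac_implies_convergence_and_regret
    (Δ : ℕ → ℝ) (hΔ : ∀ k, 0 ≤ Δ k)
    (C₁ C₂ : ℝ) (hC₁ : 0 ≤ C₁) (hC₂ : 0 ≤ C₂)
    (h : ∀ ε : ℝ, 0 < ε →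
      {k : ℕ | 1 ≤ k ∧ ε < Δ k}.Finite ∧
      ({k : ℕ | 1 ≤ k ∧ ε < Δ k}.ncard : ℝ) ≤ C₁ / ε + C₂ / ε ^ 2) :
    Tendsto Δ atTop (nhds 0) ∧
    ∀ K : ℕ, 0 < K →
      ∑ k ∈ Finset.Icc 1 K, Δ k ≤ C₁ * (1 + Real.log K) + 2 * Real.sqrt (C₂ * K) := by
  refine ⟨tendsto_zero_of_nonneg_of_finite_setOf_lt hΔ fun ε hε => ?_, fun K _ => ?_⟩
  · refine ((h ε hε).1.insert 0).subset fun k hk => ?_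
    rcases k with _ | k
    exacts [Set.mem_insert 0 _, Set.mem_insert_of_mem 0 ⟨k.succ_pos, hk⟩]
  have hgap : ∀ k ∈ Icc 1 K, Δ k ≤ C₁ / (#{j ∈ Icc 1 K | Δ k ≤ Δ j} : ℕ) +
      √(C₂ / (#{j ∈ Icc 1 K | Δ k ≤ Δ j} : ℕ)) := by
    intro k hk
    refine le_div_add_sqrt_div_of_forall_le hC₁ hC₂
      (Nat.cast_pos.2 (card_pos.2 ⟨k, mem_filter.2 ⟨hk, le_rfl⟩⟩)) fun ε hε hεk => ?_
    obtain ⟨hfin, hcard⟩ := h ε hε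
    refine le_trans ?_ hcard
    rw [← Set.ncard_coe_finset]
    refine Nat.cast_le.2 (Set.ncard_le_ncard (fun j hj => ?_) hfin)
    obtain ⟨hj, hkj⟩ := mem_filter.1 hj
    exact ⟨(mem_Icc.1 hj).1, hεk.trans_le hkj⟩
  calc ∑ k ∈ Icc 1 K, Δ k
      ≤ ∑ m ∈ Icc 1 #(Icc 1 K), (C₁ / m + √(C₂ / m)) :=
        sum_le_sum_Icc_of_le_card_filter_le (antitoneOn_div_add_sqrt_div hC₁ hC₂) hgap
    _ ≤ C₁ * (1 + Real.log K) + 2 * √(C₂ * K) := by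
        rw [Nat.card_Icc, add_tsub_cancel_right]
        exact sum_Icc_div_add_sqrt_div_le hC₁ hC₂ K
end

section
/- Consider a finite-horizon linear MDP as in the context, with features φ : S × A → ℝ^d. Then for every policy π : S × {1,…,H} → A and every stage h ∈ {1,…,H}, there exists a vector w_h ∈ ℝ^d with ‖w_h‖₂ ≤ 2H√d such that Q^π_h(s,a) = ⟨φ(s,a), w_h⟩ for all (s,a) ∈ S × A. -/
/-!
Substituting `r_h = ⟨φ, μ_h⟩` and `P_h(s'|·) = ⟨φ, θ_h(s')⟩` into the Bellman equation gives
`Q^π_h = ⟨φ, μ_h + Σ_{s'} V^π_{h+1}(s') θ_h(s')⟩`. Since rewards lie in `[0, 1]` and `P_h` is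
stochastic, `|V^π_{h+1}| ≤ H - h`, so the second term has norm at most `√d (H - h)`, and the
weight has norm at most `√d (1 + H - h) ≤ H √d`.
-/

open Matrix Finset

lemma sqrt_dotProduct_self_eq_norm {n : Type*} [Fintype n] (v : n → ℝ) :
    Real.sqrt (v ⬝ᵥ v) = ‖WithLp.toLp 2 v‖ := by
  simp [EuclideanSpace.norm_eq, dotProduct, sq]

lemma sqrt_dotProduct_self_add_le {n : Type*} [Fintype n] (u v : n → ℝ) :
    Real.sqrt ((u + v) ⬝ᵥ (u + v)) ≤ Real.sqrt (u ⬝ᵥ u) + Real.sqrt (v ⬝ᵥ v) := by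
  simpa only [sqrt_dotProduct_self_eq_norm, WithLp.toLp_add] using norm_add_le _ _

lemma abs_sum_mul_le_of_stochastic {ι : Type*} [Fintype ι] {p v : ι → ℝ} {c : ℝ}
    (hp : ∀ i, 0 ≤ p i) (hp1 : ∑ i, p i = 1) (hv : ∀ i, |v i| ≤ c) :
    |∑ i, p i * v i| ≤ c :=
  calc |∑ i, p i * v i| ≤ ∑ i, p i * |v i| := by
        refine (abs_sum_le_sum_abs _ _).trans_eq (sum_congr rfl fun i _ => ?_)
        rw [abs_mul, abs_of_nonneg (hp i)]
    _ ≤ ∑ i, p i * c := sum_le_sum fun i _ => mul_le_mul_of_nonneg_left (hv i) (hp i)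
    _ = c := by rw [← sum_mul, hp1, one_mul]

lemma abs_value_le_of_bellman {S : Type*} [Fintype S] (H : ℕ) (ρ : ℕ → S → ℝ)
    (p : ℕ → S → S → ℝ) (V : ℕ → S → ℝ)
    (hρ : ∀ h ∈ Icc 1 H, ∀ s, ρ h s ∈ Set.Icc (0 : ℝ) 1)
    (hp : ∀ h ∈ Icc 1 H, ∀ s s', 0 ≤ p h s s')
    (hp1 : ∀ h ∈ Icc 1 H, ∀ s, ∑ s', p h s s' = 1)
    (hVend : ∀ s, V (H + 1) s = 0)
    (hV : ∀ h ∈ Icc 1 H, ∀ s, V h s = ρ h s + ∑ s', p h s s' * V (h + 1) s') :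
    ∀ k ≤ H, ∀ s, |V (H + 1 - k) s| ≤ k := by
  intro k
  induction k with
  | zero => simp [hVend]
  | succ k ih =>
    intro hk s
    have hh : H + 1 - (k + 1) ∈ Icc 1 H := mem_Icc.2 ⟨by omega, by omega⟩
    have hnext : H + 1 - (k + 1) + 1 = H + 1 - k := by omega
    obtain ⟨hρ0, hρ1⟩ := hρ _ hh s
    rw [hV _ hh, hnext]
    calc _ ≤ |ρ (H + 1 - (k + 1)) s| + |∑ s', p (H + 1 - (k + 1)) s s' * V (H + 1 - k) s'| :=
          abs_add_le _ _
      _ ≤ 1 + k := add_le_add (abs_le.2 ⟨by linarith, hρ1⟩)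
          (abs_sum_mul_le_of_stochastic (hp _ hh s) (hp1 _ hh s) (ih (by omega)))
      _ = (k + 1 : ℕ) := by push_cast; ring

theorem linear_mdp_Qpi_linear_general
    {S A : Type*} [Fintype S]
    (d H : ℕ)
    (φ : S → A → Fin d → ℝ)
    (μv : ℕ → Fin d → ℝ)
    (hμ : ∀ h ∈ Finset.Icc 1 H, Real.sqrt (μv h ⬝ᵥ μv h) ≤ Real.sqrt d)
    (θ : ℕ → S → Fin d → ℝ)
    (r : ℕ → S → A → ℝ) (hr : ∀ h s a, r h s a = φ s a ⬝ᵥ μv h)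
    (hr01 : ∀ h ∈ Finset.Icc 1 H, ∀ s a, r h s a ∈ Set.Icc (0 : ℝ) 1)
    (P : ℕ → S → A → S → ℝ) (hP : ∀ h s a s', P h s a s' = φ s a ⬝ᵥ θ h s')
    (hPnn : ∀ h ∈ Finset.Icc 1 H, ∀ s a s', 0 ≤ P h s a s')
    (hPsum : ∀ h ∈ Finset.Icc 1 H, ∀ s a, ∑ s' : S, P h s a s' = 1)
    (hθ : ∀ h ∈ Finset.Icc 1 H, ∀ c : S → ℝ,
      Real.sqrt ((∑ s' : S, c s' • θ h s') ⬝ᵥ (∑ s' : S, c s' • θ h s'))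
        ≤ Real.sqrt d * ⨆ s' : S, |c s'|)
    (π : S → ℕ → A)
    (Q : ℕ → S → A → ℝ) (V : ℕ → S → ℝ)
    (hVend : ∀ s, V (H + 1) s = 0)
    (hQ : ∀ h ∈ Finset.Icc 1 H, ∀ s a,
      Q h s a = r h s a + ∑ s' : S, P h s a s' * V (h + 1) s')
    (hV : ∀ h ∈ Finset.Icc 1 H, ∀ s, V h s = Q h s (π s h)) :
    ∀ h ∈ Finset.Icc 1 H, ∃ w : Fin d → ℝ,
      Real.sqrt (w ⬝ᵥ w) ≤ 2 * H * Real.sqrt d ∧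
      ∀ s a, Q h s a = φ s a ⬝ᵥ w := by
  have hVbd := abs_value_le_of_bellman H (fun h s => r h s (π s h)) (fun h s => P h s (π s h)) V
    (fun h hh s => hr01 h hh s _) (fun h hh s => hPnn h hh s _) (fun h hh s => hPsum h hh s _)
    hVend (fun h hh s => (hV h hh s).trans (hQ h hh s _))
  intro h hh
  obtain ⟨h1, hhH⟩ := mem_Icc.1 hh
  refine ⟨μv h + ∑ s', V (h + 1) s' • θ h s', ?_, fun s a => ?_⟩
  · have hsup : ⨆ s', |V (h + 1) s'| ≤ H - h := by
      refine Real.iSup_le (fun s' => ?_) (by simpa using hhH)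
      have hnext : H + 1 - (H - h) = h + 1 := by omega
      simpa [hnext, Nat.cast_sub hhH] using hVbd (H - h) (Nat.sub_le _ _) s'
    calc _ ≤ Real.sqrt d + Real.sqrt d * (H - h) :=
          (sqrt_dotProduct_self_add_le _ _).trans (add_le_add (hμ h hh)
            ((hθ h hh _).trans (mul_le_mul_of_nonneg_left hsup (Real.sqrt_nonneg _))))
      _ ≤ 2 * H * Real.sqrt d := by
          have : (1 : ℝ) ≤ h := by exact_mod_cast h1
          nlinarith [Real.sqrt_nonneg d]
  · simp only [hQ h hh s a, hr, hP, dotProduct_add, dotProduct_sum, dotProduct_smul, smul_eq_mul,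
      mul_comm]

/-- In a finite-horizon linear MDP, for every policy `π` and stage `h`, the
action-value function `Q^π_h` is linear in the features, with weight vector of
Euclidean norm at most `2H√d`. -/
theorem linear_mdp_Qpi_linear
    {S A : Type*} [Fintype S] [Nonempty S] [Fintype A] [Nonempty A]
    (d H : ℕ) (hd : 0 < d) (hH : 0 < H)
    (φ : S → A → Fin d → ℝ) (hφ : ∀ s a, Real.sqrt (φ s a ⬝ᵥ φ s a) ≤ 1)
    (μv : ℕ → Fin d → ℝ)
    (hμ : ∀ h ∈ Finset.Icc 1 H, Real.sqrt (μv h ⬝ᵥ μv h) ≤ Real.sqrt d)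
    (θ : ℕ → S → Fin d → ℝ)
    (r : ℕ → S → A → ℝ) (hr : ∀ h s a, r h s a = φ s a ⬝ᵥ μv h)
    (hr01 : ∀ h ∈ Finset.Icc 1 H, ∀ s a, r h s a ∈ Set.Icc (0 : ℝ) 1)
    (P : ℕ → S → A → S → ℝ) (hP : ∀ h s a s', P h s a s' = φ s a ⬝ᵥ θ h s')
    (hPnn : ∀ h ∈ Finset.Icc 1 H, ∀ s a s', 0 ≤ P h s a s')
    (hPsum : ∀ h ∈ Finset.Icc 1 H, ∀ s a, ∑ s' : S, P h s a s' = 1)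
    (hθ : ∀ h ∈ Finset.Icc 1 H, ∀ c : S → ℝ,
      Real.sqrt ((∑ s' : S, c s' • θ h s') ⬝ᵥ (∑ s' : S, c s' • θ h s'))
        ≤ Real.sqrt d * ⨆ s' : S, |c s'|)
    (π : S → ℕ → A)
    (Q : ℕ → S → A → ℝ) (V : ℕ → S → ℝ)
    (hVend : ∀ s, V (H + 1) s = 0)
    (hQ : ∀ h ∈ Finset.Icc 1 H, ∀ s a,
      Q h s a = r h s a + ∑ s' : S, P h s a s' * V (h + 1) s')
    (hV : ∀ h ∈ Finset.Icc 1 H, ∀ s, V h s = Q h s (π s h)) :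
    ∀ h ∈ Finset.Icc 1 H, ∃ w : Fin d → ℝ,
      Real.sqrt (w ⬝ᵥ w) ≤ 2 * H * Real.sqrt d ∧
      ∀ s a, Q h s a = φ s a ⬝ᵥ w :=
  linear_mdp_Qpi_linear_general d H φ μv hμ θ r hr hr01 P hP hPnn hPsum hθ π Q V hVend hQ hV
end

section
/- Consider a finite-horizon linear MDP as in the context, with optimal value functions Q*_h and V*_h. Fix a stage h ∈ {1,…,H}, a vector w ∈ ℝ^d, a scalar β ≥ 0, a symmetric positive definite d×d matrix Σ, and a function V' : S → ℝ with V'(s) ≥ V*_{h+1}(s) for all s ∈ S. Suppose that for all (s,a) ∈ S × A: |⟨w, φ(s,a)⟩ − r_h(s,a) − [P_h V'](s,a)| ≤ β·√(φ(s,a)ᵀ Σ^{−1} φ(s,a)). Then for all (s,a) ∈ S × A: min{ H, ⟨w, φ(s,a)⟩ + β·√(φ(s,a)ᵀ Σ^{−1} φ(s,a)) } ≥ Q*_h(s,a). -/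
open Matrix Finset

/-- Optimism induction step: if `V' ≥ V*_{h+1}` pointwise and the linear estimate
`⟨w, φ(s,a)⟩` is within `β √(φᵀ Σ⁻¹ φ)` of `r_h(s,a) + [P_h V'](s,a)` for all
`(s,a)`, then the truncated optimistic value
`min{H, ⟨w, φ(s,a)⟩ + β √(φᵀ Σ⁻¹ φ)}` upper bounds `Q*_h(s,a)`. -/
theorem linear_mdp_optimism_step
    {S A : Type*} [Fintype S] [Nonempty S] [Fintype A] [Nonempty A]
    (d H : ℕ) (hd : 0 < d) (hH : 0 < H)
    (φ : S → A → Fin d → ℝ) (hφ : ∀ s a, Real.sqrt (φ s a ⬝ᵥ φ s a) ≤ 1)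
    (μv : ℕ → Fin d → ℝ)
    (hμ : ∀ h ∈ Finset.Icc 1 H, Real.sqrt (μv h ⬝ᵥ μv h) ≤ Real.sqrt d)
    (θ : ℕ → S → Fin d → ℝ)
    (r : ℕ → S → A → ℝ) (hr : ∀ h s a, r h s a = φ s a ⬝ᵥ μv h)
    (hr01 : ∀ h ∈ Finset.Icc 1 H, ∀ s a, r h s a ∈ Set.Icc (0 : ℝ) 1)
    (P : ℕ → S → A → S → ℝ) (hP : ∀ h s a s', P h s a s' = φ s a ⬝ᵥ θ h s')
    (hPnn : ∀ h ∈ Finset.Icc 1 H, ∀ s a s', 0 ≤ P h s a s')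
    (hPsum : ∀ h ∈ Finset.Icc 1 H, ∀ s a, ∑ s' : S, P h s a s' = 1)
    (hθ : ∀ h ∈ Finset.Icc 1 H, ∀ c : S → ℝ,
      Real.sqrt ((∑ s' : S, c s' • θ h s') ⬝ᵥ (∑ s' : S, c s' • θ h s'))
        ≤ Real.sqrt d * ⨆ s' : S, |c s'|)
    -- optimal value functions
    (Qstar : ℕ → S → A → ℝ) (Vstar : ℕ → S → ℝ)
    (hVend : ∀ s, Vstar (H + 1) s = 0)
    (hQstar : ∀ h ∈ Finset.Icc 1 H, ∀ s a,
      Qstar h s a = r h s a + ∑ s' : S, P h s a s' * Vstar (h + 1) s')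
    (hVstar : ∀ h ∈ Finset.Icc 1 H, ∀ s, Vstar h s = ⨆ a : A, Qstar h s a)
    -- the fixed data
    (h : ℕ) (hh : h ∈ Finset.Icc 1 H)
    (w : Fin d → ℝ) (β : ℝ) (hβ : 0 ≤ β)
    (Sig : Matrix (Fin d) (Fin d) ℝ) (hSig : Sig.PosDef)
    (V' : S → ℝ) (hV' : ∀ s, Vstar (h + 1) s ≤ V' s)
    (hbound : ∀ s a,
      |w ⬝ᵥ φ s a - r h s a - ∑ s' : S, P h s a s' * V' s'|
        ≤ β * Real.sqrt (φ s a ⬝ᵥ (Sig⁻¹).mulVec (φ s a))) :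
    ∀ s a,
      Qstar h s a ≤
        min (H : ℝ) (w ⬝ᵥ φ s a + β * Real.sqrt (φ s a ⬝ᵥ (Sig⁻¹).mulVec (φ s a))) := by
  -- Step 1: Vstar h' ≤ n whenever h' + n = H + 1 (downward induction)
  have key : ∀ n : ℕ, ∀ h' : ℕ, h' + n = H + 1 → 1 ≤ h' → ∀ s, Vstar h' s ≤ (n : ℝ) := by
    intro n
    induction n with
    | zero =>
      intro h' hsum _ s
      have : h' = H + 1 := by omega
      simp [this, hVend s]
    | succ n ih =>
      intro h' hsum h1 s
      have hmem : h' ∈ Finset.Icc 1 H := by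
        simp only [Finset.mem_Icc]; omega
      rw [hVstar h' hmem s]
      apply ciSup_le
      intro a
      rw [hQstar h' hmem s a]
      have hr1 : r h' s a ≤ 1 := (hr01 h' hmem s a).2
      have hsumle : ∑ s' : S, P h' s a s' * Vstar (h' + 1) s' ≤ (n : ℝ) := by
        calc ∑ s' : S, P h' s a s' * Vstar (h' + 1) s'
            ≤ ∑ s' : S, P h' s a s' * (n : ℝ) := by
              apply Finset.sum_le_sum
              intro s' _
              exact mul_le_mul_of_nonneg_left
                (ih (h' + 1) (by omega) (by omega) s') (hPnn h' hmem s a s')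
          _ = (n : ℝ) := by rw [← Finset.sum_mul, hPsum h' hmem s a, one_mul]
      push_cast
      linarith
  intro s a
  have hmem := hh
  rw [Finset.mem_Icc] at hmem
  rw [hQstar h hh s a]
  refine le_min ?_ ?_
  · -- Qstar ≤ H
    have hr1 : r h s a ≤ 1 := (hr01 h hh s a).2
    have hsumle : ∑ s' : S, P h s a s' * Vstar (h + 1) s' ≤ ((H - h : ℕ) : ℝ) := by
      calc ∑ s' : S, P h s a s' * Vstar (h + 1) s'
          ≤ ∑ s' : S, P h s a s' * ((H - h : ℕ) : ℝ) := by
            apply Finset.sum_le_sum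
            intro s' _
            exact mul_le_mul_of_nonneg_left
              (key (H - h) (h + 1) (by omega) (by omega) s') (hPnn h hh s a s')
        _ = ((H - h : ℕ) : ℝ) := by rw [← Finset.sum_mul, hPsum h hh s a, one_mul]
    have : ((H - h : ℕ) : ℝ) = (H : ℝ) - (h : ℝ) := by
      push_cast [Nat.cast_sub hmem.2]; ring
    rw [this] at hsumle
    have : (1 : ℝ) ≤ (h : ℝ) := by exact_mod_cast hmem.1
    linarith
  · -- Qstar ≤ optimistic estimate
    have hsumle : ∑ s' : S, P h s a s' * Vstar (h + 1) s'
        ≤ ∑ s' : S, P h s a s' * V' s' := by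
      apply Finset.sum_le_sum
      intro s' _
      exact mul_le_mul_of_nonneg_left (hV' s') (hPnn h hh s a s')
    have hb := hbound s a
    rw [abs_le] at hb
    linarith [hb.1]
end
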